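/- Let Y and X be Banach spaces and let f : ℝ × Y → X belong to PAA(ℝ × X). If for each bounded subset K of Y the map x ↦ f(t, x) is uniformly continuous on K uniformly in t ∈ ℝ, then for every φ ∈ PAA(Y) the function h(t) := f(t, φ(t)) belongs to PAA(X). -/
import Mathlib


open Filter Topology MeasureTheory Bornology

/-- Almost automorphic functions. -/
def AlmostAutomorphic {X : Type*} [NormedAddCommGroup X] (f : ℝ → X) : Prop :=
  Continuous f ∧
    ∀ s' : ℕ → ℝ, ∃ (k : ℕ → ℕ) (g : ℝ → X), StrictMono k ∧
      (∀ t : ℝ, Tendsto (fun n => f (t + s' (k n))) atTop (𝓝 (g t))) ∧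
      (∀ t : ℝ, Tendsto (fun n => g (t - s' (k n))) atTop (𝓝 (f t)))

/-- The ergodic space `PAP₀(X)`. -/
def PAPZero {X : Type*} [NormedAddCommGroup X] (f : ℝ → X) : Prop :=
  Continuous f ∧ (∃ C : ℝ, ∀ t : ℝ, ‖f t‖ ≤ C) ∧
    Tendsto (fun r : ℝ => (1 / (2 * r)) * ∫ s in (-r)..r, ‖f s‖) atTop (𝓝 0)

/-- Pseudo-almost automorphic functions. -/
def PseudoAlmostAutomorphic {X : Type*} [NormedAddCommGroup X] (f : ℝ → X) : Prop :=
  ∃ g φ : ℝ → X, AlmostAutomorphic g ∧ PAPZero φ ∧ ∀ t : ℝ, f t = g t + φ t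

/-- `AA(ℝ × X)`: jointly continuous `F : ℝ × Y → X` almost automorphic in `t`
uniformly for `x` in bounded subsets of `Y`. -/
def AlmostAutomorphicProd {X Y : Type*} [NormedAddCommGroup X] [NormedAddCommGroup Y]
    (F : ℝ → Y → X) : Prop :=
  Continuous (fun p : ℝ × Y => F p.1 p.2) ∧
    ∀ (s' : ℕ → ℝ) (K : Set Y), IsBounded K →
      ∃ (k : ℕ → ℕ) (G : ℝ → Y → X), StrictMono k ∧
        (∀ t : ℝ, ∀ x ∈ K, Tendsto (fun n => F (t + s' (k n)) x) atTop (𝓝 (G t x))) ∧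
        (∀ t : ℝ, ∀ x ∈ K, Tendsto (fun n => G (t - s' (k n)) x) atTop (𝓝 (F t x)))

/-- `PAP₀(ℝ × X)`: bounded continuous `F : ℝ × Y → X` whose ergodic means vanish
uniformly for `x` in bounded subsets of `Y`. -/
def PAPZeroProd {X Y : Type*} [NormedAddCommGroup X] [NormedAddCommGroup Y]
    (F : ℝ → Y → X) : Prop :=
  Continuous (fun p : ℝ × Y => F p.1 p.2) ∧ (∃ C : ℝ, ∀ (t : ℝ) (x : Y), ‖F t x‖ ≤ C) ∧
    ∀ K : Set Y, IsBounded K → ∀ ε > (0 : ℝ), ∃ r₀ : ℝ, ∀ r ≥ r₀, ∀ x ∈ K,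
      (1 / (2 * r)) * (∫ s in (-r)..r, ‖F s x‖) < ε

/-- `PAA(ℝ × X) = AA(ℝ × X) + PAP₀(ℝ × X)`. -/
def PseudoAlmostAutomorphicProd {X Y : Type*} [NormedAddCommGroup X]
    [NormedAddCommGroup Y] (F : ℝ → Y → X) : Prop :=
  ∃ G Φ : ℝ → Y → X, AlmostAutomorphicProd G ∧ PAPZeroProd Φ ∧
    ∀ (t : ℝ) (x : Y), F t x = G t x + Φ t x

lemma mean_tendsto_zero {T : ℝ → ℝ} (h1 : ∀ᶠ r in atTop, 0 ≤ T r)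
    (h2 : ∀ ε > (0:ℝ), ∀ᶠ r in atTop, T r < ε) : Tendsto T atTop (𝓝 0) := by
  rw [NormedAddCommGroup.tendsto_nhds_zero]
  intro ε hε
  filter_upwards [h1, h2 ε hε] with r hr1 hr2
  rwa [Real.norm_eq_abs, abs_of_nonneg hr1]

lemma aa_bounded {X : Type*} [NormedAddCommGroup X] {f : ℝ → X}
    (hf : AlmostAutomorphic f) : ∃ C : ℝ, 0 ≤ C ∧ ∀ t, ‖f t‖ ≤ C := by
  by_contra hc
  push_neg at hc
  have h : ∀ C : ℝ, ∃ t, C < ‖f t‖ := by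
    intro C
    rcases lt_or_ge C 0 with h | h
    · exact ⟨0, h.trans_le (norm_nonneg _)⟩
    · obtain ⟨t, ht⟩ := hc C h
      exact ⟨t, ht⟩
  choose T hT using h
  obtain ⟨k, g, hk, hfw, _⟩ := hf.2 (fun n => T n)
  obtain ⟨N, hN⟩ := Metric.tendsto_atTop.mp (hfw 0) 1 one_pos
  set n := max N (⌈‖g 0‖ + 1⌉₊) with hn
  have h1 : dist (f (0 + T (k n))) (g 0) < 1 := hN n (le_max_left _ _)
  rw [zero_add, dist_eq_norm] at h1
  have h3 : ‖f (T (k n))‖ ≤ ‖g 0‖ + 1 := by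
    have := norm_sub_norm_le (f (T (k n))) (g 0)
    linarith
  have h2 : (k n : ℝ) < ‖f (T (k n))‖ := hT (k n)
  have h4 : (n : ℝ) ≤ (k n : ℝ) := by exact_mod_cast hk.le_apply
  have h5 : ‖g 0‖ + 1 ≤ (n : ℝ) := by
    have := Nat.le_ceil (‖g 0‖ + 1)
    have h6 : ((⌈‖g 0‖ + 1⌉₊ : ℕ) : ℝ) ≤ (n : ℝ) := by
      exact_mod_cast le_max_right N _
    linarith
  linarith

lemma key_lemma {Z W : Type*} [NormedAddCommGroup Z] [NormedAddCommGroup W]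
    {p : ℝ → Z} (hp : AlmostAutomorphic p) {q : ℝ → W} (hqc : Continuous q)
    (hqm : Tendsto (fun r : ℝ => (1 / (2 * r)) * ∫ s in (-r)..r, ‖q s‖) atTop (𝓝 0))
    (t₀ : ℝ) {ε δ : ℝ} (hε : 0 < ε) (hδ : 0 < δ) :
    ∃ τ : ℝ, ‖p τ - p t₀‖ < ε ∧ ‖q τ‖ < δ := by
  by_contra hno
  push_neg at hno
  have hFIN : ∀ F : Finset ℝ, ∃ x : ℝ, ∀ c ∈ F, ‖q (c + x)‖ < δ := by
    intro F
    by_contra hF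
    push_neg at hF
    set C : ℝ := ∑ c ∈ F, |c| with hCdef
    have hC0 : 0 ≤ C := Finset.sum_nonneg fun c _ => abs_nonneg c
    have hCc : ∀ c ∈ F, |c| ≤ C := fun c hc =>
      Finset.single_le_sum (fun i _ => abs_nonneg i) hc
    set η : ℝ := δ / (2 * (F.card + 1)) with hηdef
    have hη0 : 0 < η := by positivity
    obtain ⟨r₁, hr₁⟩ := Metric.tendsto_atTop.mp hqm η hη0
    set R : ℝ := max C r₁ + 1 with hRdef
    have hRC : C < R := lt_of_le_of_lt (le_max_left _ _) (lt_add_one _)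
    have hR0 : 0 < R := lt_of_le_of_lt hC0 hRC
    set r' : ℝ := R + C with hr'def
    have hr'0 : 0 < r' := by positivity
    have hr'r₁ : r₁ ≤ r' := by
      have : r₁ ≤ R := le_trans (le_max_right C r₁) (le_of_lt (lt_add_one _))
      linarith
    have hint : (∫ s in (-r')..r', ‖q s‖) ≤ η * (2 * r') := by
      have h0 := hr₁ r' hr'r₁
      rw [Real.dist_eq, sub_zero] at h0
      have h2 : (1 / (2 * r')) * ∫ s in (-r')..r', ‖q s‖ < η :=
        lt_of_le_of_lt (le_abs_self _) h0
      have h3 : (0:ℝ) < 2 * r' := by positivity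
      have h4 : (∫ s in (-r')..r', ‖q s‖) =
          (2 * r') * ((1 / (2 * r')) * ∫ s in (-r')..r', ‖q s‖) := by
        field_simp
      rw [h4]
      calc (2 * r') * ((1 / (2 * r')) * ∫ s in (-r')..r', ‖q s‖)
          ≤ (2 * r') * η := by nlinarith
        _ = η * (2 * r') := by ring
    have hql : ∀ x : ℝ, δ ≤ ∑ c ∈ F, ‖q (c + x)‖ := by
      intro x
      obtain ⟨c, hcF, hcx⟩ := hF x
      exact le_trans hcx (Finset.single_le_sum (f := fun c => ‖q (c + x)‖)
        (fun i _ => norm_nonneg _) hcF)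
    have hScont : Continuous fun x : ℝ => ∑ c ∈ F, ‖q (c + x)‖ := by
      apply continuous_finset_sum
      intro c _
      exact (hqc.comp (continuous_const.add continuous_id)).norm
    have hint2 : δ * (2 * R) ≤ ∫ x in (-R)..R, ∑ c ∈ F, ‖q (c + x)‖ := by
      have hmono := intervalIntegral.integral_mono_on (μ := volume)
        (by linarith : (-R) ≤ R) (intervalIntegrable_const (c := δ))
        (hScont.intervalIntegrable _ _) (fun x _ => hql x)
      rw [intervalIntegral.integral_const, smul_eq_mul] at hmono
      calc δ * (2 * R) = (R - -R) * δ := by ring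
        _ ≤ _ := hmono
    have hsum : (∫ x in (-R)..R, ∑ c ∈ F, ‖q (c + x)‖) =
        ∑ c ∈ F, ∫ x in (-R)..R, ‖q (c + x)‖ :=
      intervalIntegral.integral_finset_sum (fun c _ =>
        ((hqc.comp (continuous_const.add continuous_id)).norm).intervalIntegrable _ _)
    have hterm : ∀ c ∈ F, (∫ x in (-R)..R, ‖q (c + x)‖) ≤ η * (2 * r') := by
      intro c hc
      have h1 : (∫ x in (-R)..R, ‖q (c + x)‖) = ∫ u in (c + -R)..(c + R), ‖q u‖ :=
        intervalIntegral.integral_comp_add_left (fun u => ‖q u‖) c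
      rw [h1]
      refine le_trans (intervalIntegral.integral_mono_interval ?_ (by linarith) ?_
        (Filter.Eventually.of_forall fun x => norm_nonneg _)
        ((hqc.norm).intervalIntegrable _ _)) hint
      · have := (abs_le.mp (hCc c hc)).1; simp only [hr'def]; linarith
      · have := (abs_le.mp (hCc c hc)).2; simp only [hr'def]; linarith
    have hbig : δ * (2 * R) ≤ (F.card : ℝ) * (η * (2 * r')) := by
      have := Finset.sum_le_card_nsmul F _ (η * (2 * r')) hterm
      rw [nsmul_eq_mul] at this
      calc δ * (2 * R) ≤ ∫ x in (-R)..R, ∑ c ∈ F, ‖q (c + x)‖ := hint2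
        _ = ∑ c ∈ F, ∫ x in (-R)..R, ‖q (c + x)‖ := hsum
        _ ≤ (F.card : ℝ) * (η * (2 * r')) := this
    have hcardη : (F.card : ℝ) * η ≤ δ / 2 := by
      have hn : (0:ℝ) ≤ (F.card : ℝ) := Nat.cast_nonneg _
      have hpos : (0:ℝ) < 2 * ((F.card:ℝ) + 1) := by positivity
      rw [hηdef, ← mul_div_assoc, div_le_div_iff₀ hpos (by norm_num : (0:ℝ) < 2)]
      nlinarith
    have hfinal : δ * (2 * R) ≤ (δ / 2) * (2 * r') := by
      calc δ * (2 * R) ≤ (F.card : ℝ) * (η * (2 * r')) := hbig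
        _ = ((F.card : ℝ) * η) * (2 * r') := by ring
        _ ≤ (δ / 2) * (2 * r') := by nlinarith
    have : R ≤ C := by nlinarith
    linarith
  choose Wt hWt using hFIN
  let Fs : ℕ → Finset ℝ := fun n =>
    Nat.rec (motive := fun _ => Finset ℝ) ∅ (fun _ Fn => insert (t₀ - Wt Fn) Fn) n
  have hFsS : ∀ n, Fs (n + 1) = insert (t₀ - Wt (Fs n)) (Fs n) := fun n => rfl
  set s : ℕ → ℝ := fun n => Wt (Fs n) with hsdef
  have hmem : ∀ m n, m < n → (t₀ - s m) ∈ Fs n := by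
    intro m n h
    induction n with
    | zero => exact absurd h (Nat.not_lt_zero m)
    | succ n ih =>
      rw [hFsS]
      rcases Nat.lt_succ_iff_lt_or_eq.mp h with h' | h'
      · exact Finset.mem_insert_of_mem (ih h')
      · subst h'; exact Finset.mem_insert_self _ _
  have hprop : ∀ m n, m < n → ‖q ((t₀ - s m) + s n)‖ < δ := fun m n h =>
    hWt (Fs n) _ (hmem m n h)
  obtain ⟨k, pt, hk, hfw, hbw⟩ := hp.2 s
  obtain ⟨M₁, hM₁⟩ := Metric.tendsto_atTop.mp (hbw t₀) (ε/2) (by linarith)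
  obtain ⟨M₂, hM₂⟩ := Metric.tendsto_atTop.mp (hfw (t₀ - s (k M₁))) (ε/2) (by linarith)
  set n := max M₂ (M₁ + 1) with hndef
  have h1 : dist (pt (t₀ - s (k M₁))) (p t₀) < ε/2 := hM₁ M₁ le_rfl
  have h2 : dist (p ((t₀ - s (k M₁)) + s (k n))) (pt (t₀ - s (k M₁))) < ε/2 :=
    hM₂ n (le_max_left _ _)
  set τ := (t₀ - s (k M₁)) + s (k n) with hτdef
  have h3 : ‖p τ - p t₀‖ < ε := by
    rw [← dist_eq_norm]
    calc dist (p τ) (p t₀) ≤ dist (p τ) (pt (t₀ - s (k M₁))) + dist (pt (t₀ - s (k M₁))) (p t₀) :=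
          dist_triangle _ _ _
      _ < ε/2 + ε/2 := add_lt_add h2 h1
      _ = ε := by ring
  have h4 := hno τ h3
  have h5 : ‖q τ‖ < δ :=
    hprop (k M₁) (k n) (hk (lt_of_lt_of_le (Nat.lt_succ_self M₁) (le_max_right M₂ (M₁+1))))
  exact absurd h5 (not_lt.mpr h4)

lemma aa_net {Z : Type*} [NormedAddCommGroup Z] {g : ℝ → Z}
    (hg : AlmostAutomorphic g) {δ : ℝ} (hδ : 0 < δ) :
    ∃ F : Finset ℝ, ∀ s : ℝ, ∃ c ∈ F, ‖g s - g c‖ < δ := by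
  by_contra h
  push_neg at h
  choose Wt hWt using h
  let Fs : ℕ → Finset ℝ := fun n =>
    Nat.rec (motive := fun _ => Finset ℝ) ∅ (fun _ Fn => insert (Wt Fn) Fn) n
  have hFsS : ∀ n, Fs (n + 1) = insert (Wt (Fs n)) (Fs n) := fun n => rfl
  set s : ℕ → ℝ := fun n => Wt (Fs n) with hsdef
  have hmem : ∀ m n, m < n → s m ∈ Fs n := by
    intro m n h'
    induction n with
    | zero => exact absurd h' (Nat.not_lt_zero m)
    | succ n ih =>
      rw [hFsS]
      rcases Nat.lt_succ_iff_lt_or_eq.mp h' with h'' | h''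
      · exact Finset.mem_insert_of_mem (ih h'')
      · subst h''; exact Finset.mem_insert_self _ _
  have hsep : ∀ m n, m < n → δ ≤ ‖g (s n) - g (s m)‖ := fun m n h' =>
    hWt (Fs n) (s m) (hmem m n h')
  obtain ⟨k, gt, hk, hfw, _⟩ := hg.2 s
  obtain ⟨N, hN⟩ := Metric.tendsto_atTop.mp (hfw 0) (δ/2) (by linarith)
  have h1 := hN N le_rfl
  have h2 := hN (N+1) (Nat.le_succ N)
  have h3 : ‖g (0 + s (k (N+1))) - g (0 + s (k N))‖ < δ := by
    rw [← dist_eq_norm]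
    calc dist (g (0 + s (k (N+1)))) (g (0 + s (k N)))
        ≤ dist (g (0 + s (k (N+1)))) (gt 0) + dist (gt 0) (g (0 + s (k N))) := dist_triangle _ _ _
      _ < δ/2 + δ/2 := add_lt_add h2 (by rw [dist_comm]; exact h1)
      _ = δ := by ring
  rw [zero_add, zero_add] at h3
  exact absurd h3 (not_lt.mpr (hsep (k N) (k (N+1)) (hk (Nat.lt_succ_self N))))

lemma chain_bound {X Y : Type*} [NormedAddCommGroup X] [NormedAddCommGroup Y]
    [NormedSpace ℂ Y] {f : ℝ → Y → X} {M δ : ℝ} (hM : 0 ≤ M) (hδ : 0 < δ)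
    (h : ∀ t : ℝ, ∀ x ∈ Metric.closedBall (0:Y) M, ∀ y ∈ Metric.closedBall (0:Y) M,
      ‖x - y‖ < δ → ‖f t x - f t y‖ < 1) :
    ∃ Cb : ℝ, 0 ≤ Cb ∧ ∀ t : ℝ, ∀ x ∈ Metric.closedBall (0:Y) M,
      ∀ y ∈ Metric.closedBall (0:Y) M, ‖f t x - f t y‖ ≤ Cb := by
  obtain ⟨N, hN⟩ := exists_nat_gt (2 * M / δ)
  have hN0 : 0 < N := by
    rcases Nat.eq_zero_or_pos N with h0 | h0
    · subst h0
      exfalso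
      have : (0:ℝ) ≤ 2 * M / δ := by positivity
      simp only [Nat.cast_zero] at hN
      linarith
    · exact h0
  have hNR : (0:ℝ) < (N:ℝ) := by exact_mod_cast hN0
  refine ⟨N, Nat.cast_nonneg N, ?_⟩
  intro t x hx y hy
  rw [Metric.mem_closedBall, dist_zero_right] at hx hy
  set z : ℕ → Y := fun j => x + ((j : ℂ)/(N : ℂ)) • (y - x) with hzdef
  have hnorm : ∀ j : ℕ, ‖((j:ℂ)/(N:ℂ))‖ = (j:ℝ)/(N:ℝ) := by
    intro j
    rw [norm_div]
    simp [Complex.norm_natCast]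
  have hmem : ∀ j ≤ N, ‖z j‖ ≤ M := by
    intro j hj
    have hjN : (j:ℝ)/(N:ℝ) ≤ 1 := by
      rw [div_le_one hNR]; exact_mod_cast hj
    have hjN0 : (0:ℝ) ≤ (j:ℝ)/(N:ℝ) := by positivity
    have hzj : z j = (1 - (j:ℂ)/(N:ℂ)) • x + ((j:ℂ)/(N:ℂ)) • y := by
      simp only [hzdef, smul_sub, sub_smul, one_smul]
      abel
    rw [hzj]
    have h1 : ‖(1 - (j:ℂ)/(N:ℂ))‖ = 1 - (j:ℝ)/(N:ℝ) := by
      have he : ((1:ℂ) - (j:ℂ)/(N:ℂ)) = ((1 - (j:ℝ)/(N:ℝ) : ℝ) : ℂ) := by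
        push_cast; ring
      rw [he, Complex.norm_real, Real.norm_eq_abs, abs_of_nonneg (by linarith)]
    calc ‖(1 - (j:ℂ)/(N:ℂ)) • x + ((j:ℂ)/(N:ℂ)) • y‖
        ≤ ‖(1 - (j:ℂ)/(N:ℂ)) • x‖ + ‖((j:ℂ)/(N:ℂ)) • y‖ := norm_add_le _ _
      _ = (1 - (j:ℝ)/(N:ℝ)) * ‖x‖ + ((j:ℝ)/(N:ℝ)) * ‖y‖ := by
          rw [norm_smul, norm_smul, h1, hnorm j]
      _ ≤ (1 - (j:ℝ)/(N:ℝ)) * M + ((j:ℝ)/(N:ℝ)) * M := by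
          apply add_le_add
          · exact mul_le_mul_of_nonneg_left hx (by linarith)
          · exact mul_le_mul_of_nonneg_left hy hjN0
      _ = M := by ring
  have hstep : ∀ j : ℕ, ‖z (j+1) - z j‖ < δ := by
    intro j
    have he : z (j+1) - z j = ((1:ℂ)/(N:ℂ)) • (y - x) := by
      simp only [hzdef]
      rw [add_sub_add_left_eq_sub, ← sub_smul]
      congr 1
      push_cast
      ring
    rw [he, norm_smul]
    have h1 : ‖((1:ℂ)/(N:ℂ))‖ = 1/(N:ℝ) := by
      simpa using hnorm 1
    rw [h1]
    have h2 : ‖y - x‖ ≤ 2 * M := le_trans (norm_sub_le _ _) (by linarith)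
    have h3 : 2 * M / (N:ℝ) < δ := by
      rw [div_lt_iff₀ hNR]
      have := (div_lt_iff₀ hδ).mp hN
      linarith
    calc (1/(N:ℝ)) * ‖y - x‖ ≤ (1/(N:ℝ)) * (2*M) := by
          apply mul_le_mul_of_nonneg_left h2 (by positivity)
      _ = 2*M/(N:ℝ) := by ring
      _ < δ := h3
  have hind : ∀ j, j ≤ N → ‖f t (z j) - f t (z 0)‖ ≤ (j : ℝ) := by
    intro j
    induction j with
    | zero => intro _; simp
    | succ j ih =>
      intro hj
      have hj' : j ≤ N := Nat.le_of_succ_le hj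
      have hb := h t (z (j+1))
        (by rw [Metric.mem_closedBall, dist_zero_right]; exact hmem _ hj)
        (z j) (by rw [Metric.mem_closedBall, dist_zero_right]; exact hmem _ hj')
        (hstep j)
      have htri : ‖f t (z (j+1)) - f t (z 0)‖
          ≤ ‖f t (z (j+1)) - f t (z j)‖ + ‖f t (z j) - f t (z 0)‖ := by
        have : f t (z (j+1)) - f t (z 0) = (f t (z (j+1)) - f t (z j)) + (f t (z j) - f t (z 0)) := by
          abel
        rw [this]; exact norm_add_le _ _
      calc ‖f t (z (j+1)) - f t (z 0)‖
          ≤ ‖f t (z (j+1)) - f t (z j)‖ + ‖f t (z j) - f t (z 0)‖ := htri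
        _ ≤ 1 + (j:ℝ) := add_le_add hb.le (ih hj')
        _ = ((j+1 : ℕ) : ℝ) := by push_cast; ring
  have hz0 : z 0 = x := by simp [hzdef]
  have hzN : z N = y := by
    have hNe : ((N:ℂ)/(N:ℂ)) = 1 := div_self (Nat.cast_ne_zero.mpr hN0.ne')
    simp only [hzdef, hNe, one_smul]
    abel
  have := hind N le_rfl
  rw [hz0, hzN] at this
  calc ‖f t x - f t y‖ = ‖f t y - f t x‖ := norm_sub_rev _ _
    _ ≤ (N:ℝ) := this

lemma uc_of_decomp {X Y : Type*} [NormedAddCommGroup X] [NormedAddCommGroup Y]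
    {f G Φ : ℝ → Y → X} (hdec : ∀ (t : ℝ) (x : Y), f t x = G t x + Φ t x)
    (hGaa : AlmostAutomorphicProd G) (hΦ : PAPZeroProd Φ)
    {K : Set Y} (hK : IsBounded K)
    (hucf : ∀ ε > (0:ℝ), ∃ δ > (0:ℝ), ∀ t : ℝ, ∀ x ∈ K, ∀ y ∈ K,
      ‖x - y‖ < δ → ‖f t x - f t y‖ < ε) :
    ∀ ε > (0:ℝ), ∃ δ > (0:ℝ), ∀ t : ℝ, ∀ x ∈ K, ∀ y ∈ K,
      ‖x - y‖ < δ → ‖G t x - G t y‖ < ε := by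
  intro ε hε
  obtain ⟨δ, hδ0, hδ⟩ := hucf (ε/4) (by linarith)
  refine ⟨δ, hδ0, ?_⟩
  intro t x hx y hy hxy
  have hGc : ∀ c : Y, Continuous fun τ => G τ c := fun c =>
    hGaa.1.comp (continuous_id.prodMk continuous_const)
  have hΦc : ∀ c : Y, Continuous fun τ => Φ τ c := fun c =>
    hΦ.1.comp (continuous_id.prodMk continuous_const)
  set p : ℝ → X := fun τ => G τ x - G τ y with hpdef
  set q : ℝ → X := fun τ => Φ τ x - Φ τ y with hqdef
  have hpaa : AlmostAutomorphic p := by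
    constructor
    · exact (hGc x).sub (hGc y)
    · intro s'
      obtain ⟨k, Gt, hk, hfw, hbw⟩ := hGaa.2 s' {x, y}
        (((Set.finite_singleton y).insert x).isBounded)
      exact ⟨k, fun τ => Gt τ x - Gt τ y, hk,
        fun τ => ((hfw τ x (by simp)).sub (hfw τ y (by simp))),
        fun τ => ((hbw τ x (by simp)).sub (hbw τ y (by simp)))⟩
  have hqc : Continuous q := (hΦc x).sub (hΦc y)
  have hqm : Tendsto (fun r : ℝ => (1 / (2*r)) * ∫ s in (-r)..r, ‖q s‖) atTop (𝓝 0) := by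
    apply mean_tendsto_zero
    · filter_upwards [eventually_ge_atTop (1:ℝ)] with r hr
      have h0 : (0:ℝ) ≤ ∫ s in (-r)..r, ‖q s‖ :=
        intervalIntegral.integral_nonneg (by linarith) (fun u _ => norm_nonneg _)
      have : (0:ℝ) ≤ 1/(2*r) := by positivity
      exact mul_nonneg this h0
    · intro ε' hε'
      obtain ⟨r₀, hr₀⟩ := hΦ.2.2 K hK (ε'/3) (by linarith)
      filter_upwards [eventually_ge_atTop (max r₀ 1)] with r hr
      have hr1 : (1:ℝ) ≤ r := le_trans (le_max_right _ _) hr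
      have hx' := hr₀ r (le_trans (le_max_left _ _) hr) x hx
      have hy' := hr₀ r (le_trans (le_max_left _ _) hr) y hy
      have hix : IntervalIntegrable (fun s => ‖Φ s x‖) volume (-r) r :=
        ((hΦc x).norm).intervalIntegrable _ _
      have hiy : IntervalIntegrable (fun s => ‖Φ s y‖) volume (-r) r :=
        ((hΦc y).norm).intervalIntegrable _ _
      have hint : (∫ s in (-r)..r, ‖q s‖)
          ≤ (∫ s in (-r)..r, ‖Φ s x‖) + (∫ s in (-r)..r, ‖Φ s y‖) := by
        rw [← intervalIntegral.integral_add hix hiy]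
        apply intervalIntegral.integral_mono_on (by linarith) (hqc.norm.intervalIntegrable _ _)
          (hix.add hiy)
        intro u _
        exact norm_sub_le _ _
      have h2r : (0:ℝ) ≤ 1/(2*r) := by positivity
      calc (1/(2*r)) * ∫ s in (-r)..r, ‖q s‖
          ≤ (1/(2*r)) * ((∫ s in (-r)..r, ‖Φ s x‖) + (∫ s in (-r)..r, ‖Φ s y‖)) :=
            mul_le_mul_of_nonneg_left hint h2r
        _ = (1/(2*r)) * (∫ s in (-r)..r, ‖Φ s x‖) + (1/(2*r)) * (∫ s in (-r)..r, ‖Φ s y‖) :=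
            mul_add _ _ _
        _ < ε'/3 + ε'/3 := add_lt_add hx' hy'
        _ < ε' := by linarith
  obtain ⟨τ, hτ1, hτ2⟩ := key_lemma hpaa hqc hqm t (by linarith : (0:ℝ) < ε/4)
    (by linarith : (0:ℝ) < ε/4)
  have hfτ := hδ τ x hx y hy hxy
  have hGτ : G τ x - G τ y = (f τ x - f τ y) - (Φ τ x - Φ τ y) := by
    rw [hdec τ x, hdec τ y]; abel
  have h1 : ‖p τ‖ ≤ ‖f τ x - f τ y‖ + ‖q τ‖ := by
    rw [hpdef]
    simp only []
    rw [hGτ]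
    exact norm_sub_le _ _
  have h2 : ‖p t‖ ≤ ‖p t - p τ‖ + ‖p τ‖ := by
    simpa using norm_add_le (p t - p τ) (p τ)
  have h3 : ‖p t - p τ‖ = ‖p τ - p t‖ := norm_sub_rev _ _
  have : ‖p t‖ < ε := by
    rw [h3] at h2
    calc ‖p t‖ ≤ ‖p τ - p t‖ + ‖p τ‖ := h2
      _ ≤ ‖p τ - p t‖ + (‖f τ x - f τ y‖ + ‖q τ‖) := by linarith [h1]
      _ < ε/4 + (ε/4 + ε/4) := by
          apply add_lt_add hτ1
          exact add_lt_add hfτ hτ2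
      _ < ε := by linarith
  exact this

set_option maxHeartbeats 2000000 in
/-- Composition theorem: if `f ∈ PAA(ℝ × X)` and `x ↦ f(t,x)` is uniformly continuous
on bounded subsets of `Y` uniformly in `t`, then `t ↦ f(t, φ(t)) ∈ PAA(X)` for every
`φ ∈ PAA(Y)`. -/
theorem pseudoAlmostAutomorphic_comp {X Y : Type*} [NormedAddCommGroup X]
    [NormedSpace ℂ X] [CompleteSpace X] [NormedAddCommGroup Y] [NormedSpace ℂ Y]
    [CompleteSpace Y] (f : ℝ → Y → X)
    (hf : PseudoAlmostAutomorphicProd f)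
    (huc : ∀ K : Set Y, IsBounded K → ∀ ε > (0 : ℝ), ∃ δ > (0 : ℝ),
      ∀ t : ℝ, ∀ x ∈ K, ∀ y ∈ K, ‖x - y‖ < δ → ‖f t x - f t y‖ < ε)
    (φ : ℝ → Y) (hφ : PseudoAlmostAutomorphic φ) :
    PseudoAlmostAutomorphic (fun t => f t (φ t)) := by
  obtain ⟨G, Φ, hGaa, hΦp, hdec⟩ := hf
  obtain ⟨g, ψ, hgaa, hψ, hφdec⟩ := hφ
  have hGc : ∀ c : Y, Continuous fun τ => G τ c := fun c =>
    hGaa.1.comp (continuous_id.prodMk continuous_const)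
  have hΦc : ∀ c : Y, Continuous fun τ => Φ τ c := fun c =>
    hΦp.1.comp (continuous_id.prodMk continuous_const)
  have hfc : Continuous (fun p : ℝ × Y => f p.1 p.2) := by
    have he : (fun p : ℝ × Y => f p.1 p.2) = fun p : ℝ × Y => G p.1 p.2 + Φ p.1 p.2 :=
      funext fun p => hdec p.1 p.2
    rw [he]; exact hGaa.1.add hΦp.1
  have hφc : Continuous φ := by
    have he : φ = fun t => g t + ψ t := funext hφdec
    rw [he]; exact hgaa.1.add hψ.1
  obtain ⟨Cg, hCg0, hCg⟩ := aa_bounded hgaa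
  obtain ⟨Cψ', hCψ'⟩ := hψ.2.1
  set Cψ := max Cψ' 0 with hCψdef
  have hCψ : ∀ t, ‖ψ t‖ ≤ Cψ := fun t => le_trans (hCψ' t) (le_max_left _ _)
  have hCψ0 : 0 ≤ Cψ := le_max_right _ _
  set M : ℝ := Cg + Cψ + 1 with hMdef
  have hM0 : (0:ℝ) ≤ M := by linarith
  set K : Set Y := Metric.closedBall (0:Y) M with hKdef
  have hK : IsBounded K := Metric.isBounded_closedBall
  have hmemK : ∀ z : Y, ‖z‖ ≤ M → z ∈ K := fun z hz => by
    rw [hKdef, Metric.mem_closedBall, dist_zero_right]; exact hz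
  have hgK : ∀ t, g t ∈ K := fun t => hmemK _ (by linarith [hCg t])
  have hφK : ∀ t, φ t ∈ K := fun t => hmemK _ (by
    rw [hφdec t]
    calc ‖g t + ψ t‖ ≤ ‖g t‖ + ‖ψ t‖ := norm_add_le _ _
      _ ≤ M := by linarith [hCg t, hCψ t])
  have hucf : ∀ ε > (0:ℝ), ∃ δ > (0:ℝ), ∀ t : ℝ, ∀ x ∈ K, ∀ y ∈ K,
      ‖x - y‖ < δ → ‖f t x - f t y‖ < ε := fun ε hε => huc K hK ε hε
  have hucG := uc_of_decomp hdec hGaa hΦp hK hucf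
  have hucΦ : ∀ ε > (0:ℝ), ∃ δ > (0:ℝ), ∀ t : ℝ, ∀ x ∈ K, ∀ y ∈ K,
      ‖x - y‖ < δ → ‖Φ t x - Φ t y‖ < ε := by
    intro ε hε
    obtain ⟨δ₁, hδ₁0, hδ₁⟩ := hucf (ε/2) (by linarith)
    obtain ⟨δ₂, hδ₂0, hδ₂⟩ := hucG (ε/2) (by linarith)
    refine ⟨min δ₁ δ₂, lt_min hδ₁0 hδ₂0, ?_⟩
    intro t x hx y hy hxy
    have hΦeq : Φ t x - Φ t y = (f t x - f t y) - (G t x - G t y) := by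
      rw [hdec t x, hdec t y]; abel
    rw [hΦeq]
    calc ‖(f t x - f t y) - (G t x - G t y)‖ ≤ ‖f t x - f t y‖ + ‖G t x - G t y‖ :=
        norm_sub_le _ _
      _ < ε/2 + ε/2 := add_lt_add
          (hδ₁ t x hx y hy (lt_of_lt_of_le hxy (min_le_left _ _)))
          (hδ₂ t x hx y hy (lt_of_lt_of_le hxy (min_le_right _ _)))
      _ = ε := by ring
  obtain ⟨δc, hδc0, hδc⟩ := hucf 1 one_pos
  obtain ⟨Cb, hCb0, hCb⟩ := chain_bound (f := f) hM0 hδc0 hδc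
  -- the almost automorphic part
  set α : ℝ → X := fun t => G t (g t) with hαdef
  have hαc : Continuous α := hGaa.1.comp (continuous_id.prodMk hgaa.1)
  have hαaa : AlmostAutomorphic α := by
    refine ⟨hαc, ?_⟩
    intro s'
    obtain ⟨k₁, gt, hk₁, hgfw, hgbw⟩ := hgaa.2 s'
    obtain ⟨k₂, Gt, hk₂, hGfw, hGbw⟩ := hGaa.2 (fun n => s' (k₁ n)) K hK
    refine ⟨fun n => k₁ (k₂ n), fun t => Gt t (gt t), hk₁.comp hk₂, ?_, ?_⟩
    · -- forward
      intro t
      have hgfw' : Tendsto (fun n => g (t + s' (k₁ (k₂ n)))) atTop (𝓝 (gt t)) :=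
        (hgfw t).comp hk₂.tendsto_atTop
      have hgtK : gt t ∈ K := by
        apply hmemK
        exact le_of_tendsto (hgfw').norm
          (Filter.Eventually.of_forall fun n => by linarith [hCg (t + s' (k₁ (k₂ n)))])
      rw [Metric.tendsto_atTop]
      intro ε hε
      obtain ⟨δG, hδG0, hδG⟩ := hucG (ε/2) (by linarith)
      obtain ⟨N₁, hN₁⟩ := Metric.tendsto_atTop.mp hgfw' δG hδG0
      obtain ⟨N₂, hN₂⟩ := Metric.tendsto_atTop.mp (hGfw t (gt t) hgtK) (ε/2) (by linarith)
      refine ⟨max N₁ N₂, fun n hn => ?_⟩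
      have hn₁ := hN₁ n (le_trans (le_max_left _ _) hn)
      have hn₂ := hN₂ n (le_trans (le_max_right _ _) hn)
      calc dist (α (t + s' (k₁ (k₂ n)))) (Gt t (gt t))
          ≤ dist (G (t + s' (k₁ (k₂ n))) (g (t + s' (k₁ (k₂ n)))))
              (G (t + s' (k₁ (k₂ n))) (gt t))
            + dist (G (t + s' (k₁ (k₂ n))) (gt t)) (Gt t (gt t)) := dist_triangle _ _ _
        _ < ε/2 + ε/2 := by
            apply add_lt_add
            · rw [dist_eq_norm]
              apply hδG (t + s' (k₁ (k₂ n))) _ (hgK _) _ hgtK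
              rw [← dist_eq_norm]
              exact hn₁
            · exact hn₂
        _ = ε := by ring
    · -- backward
      intro t
      have hgbw' : Tendsto (fun n => gt (t - s' (k₁ (k₂ n)))) atTop (𝓝 (g t)) :=
        (hgbw t).comp hk₂.tendsto_atTop
      have hgtK : ∀ τ : ℝ, gt τ ∈ K := by
        intro τ
        have hgfw'τ : Tendsto (fun n => g (τ + s' (k₁ (k₂ n)))) atTop (𝓝 (gt τ)) :=
          (hgfw τ).comp hk₂.tendsto_atTop
        apply hmemK
        exact le_of_tendsto hgfw'τ.norm
          (Filter.Eventually.of_forall fun n => by linarith [hCg (τ + s' (k₁ (k₂ n)))])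
      rw [Metric.tendsto_atTop]
      intro ε hε
      obtain ⟨δG, hδG0, hδG⟩ := hucG (ε/4) (by linarith)
      have hucGt : ∀ τ : ℝ, ∀ x ∈ K, ∀ y ∈ K, ‖x - y‖ < δG → ‖Gt τ x - Gt τ y‖ ≤ ε/4 := by
        intro τ x hxK y hyK hxy
        have h1 : Tendsto (fun n => ‖G (τ + s' (k₁ (k₂ n))) x - G (τ + s' (k₁ (k₂ n))) y‖)
            atTop (𝓝 ‖Gt τ x - Gt τ y‖) := ((hGfw τ x hxK).sub (hGfw τ y hyK)).norm
        exact le_of_tendsto h1 (Filter.Eventually.of_forall fun n =>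
          (hδG (τ + s' (k₁ (k₂ n))) x hxK y hyK hxy).le)
      obtain ⟨N₁, hN₁⟩ := Metric.tendsto_atTop.mp hgbw' δG hδG0
      obtain ⟨N₂, hN₂⟩ := Metric.tendsto_atTop.mp (hGbw t (g t) (hgK t)) (ε/2) (by linarith)
      refine ⟨max N₁ N₂, fun n hn => ?_⟩
      have hn₁ := hN₁ n (le_trans (le_max_left _ _) hn)
      have hn₂ := hN₂ n (le_trans (le_max_right _ _) hn)
      calc dist (Gt (t - s' (k₁ (k₂ n))) (gt (t - s' (k₁ (k₂ n))))) (α t)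
          ≤ dist (Gt (t - s' (k₁ (k₂ n))) (gt (t - s' (k₁ (k₂ n)))))
              (Gt (t - s' (k₁ (k₂ n))) (g t))
            + dist (Gt (t - s' (k₁ (k₂ n))) (g t)) (G t (g t)) := dist_triangle _ _ _
        _ < ε/2 + ε/2 := by
            apply add_lt_add_of_le_of_lt
            · rw [dist_eq_norm]
              refine le_trans (hucGt _ _ (hgtK _) _ (hgK t) ?_) (by linarith)
              rw [← dist_eq_norm]
              exact hn₁
            · exact hn₂
        _ = ε := by ring
  -- the ergodic part
  set β : ℝ → X := fun t => f t (φ t) - G t (g t) with hβdef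
  have hβc : Continuous β := (hfc.comp (continuous_id.prodMk hφc)).sub hαc
  obtain ⟨CΦ', hCΦ'⟩ := hΦp.2.1
  have hβeq : ∀ s : ℝ, β s = (f s (φ s) - f s (g s)) + Φ s (g s) := by
    intro s
    have : β s = f s (φ s) - G s (g s) := rfl
    rw [this, hdec s (g s)]
    abel
  have hβbd : ∀ t, ‖β t‖ ≤ Cb + CΦ' := by
    intro t
    rw [hβeq t]
    calc ‖(f t (φ t) - f t (g t)) + Φ t (g t)‖
        ≤ ‖f t (φ t) - f t (g t)‖ + ‖Φ t (g t)‖ := norm_add_le _ _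
      _ ≤ Cb + CΦ' := add_le_add (hCb t _ (hφK t) _ (hgK t)) (hCΦ' t (g t))
  have hβmean : Tendsto (fun r : ℝ => (1 / (2 * r)) * ∫ s in (-r)..r, ‖β s‖) atTop (𝓝 0) := by
    apply mean_tendsto_zero
    · filter_upwards [eventually_ge_atTop (1:ℝ)] with r hr
      exact mul_nonneg (by positivity)
        (intervalIntegral.integral_nonneg (by linarith) (fun u _ => norm_nonneg _))
    · intro ε hε
      set ε' := ε/5 with hε'def
      have hε'0 : 0 < ε' := by rw [hε'def]; linarith
      obtain ⟨δ₁, hδ₁0, hδ₁⟩ := hucf ε' hε'0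
      set c : ℝ := Cb / δ₁ with hcdef
      have hc0 : 0 ≤ c := by positivity
      obtain ⟨δ₂, hδ₂0, hδ₂⟩ := hucΦ ε' hε'0
      obtain ⟨F, hF⟩ := aa_net hgaa hδ₂0
      have hpt : ∀ s : ℝ, ‖β s‖ ≤ 2*ε' + c * ‖ψ s‖ + ∑ i ∈ F, ‖Φ s (g i)‖ := by
        intro s
        have hψeq : φ s - g s = ψ s := by rw [hφdec s]; abel
        have hA : ‖f s (φ s) - f s (g s)‖ ≤ ε' + c * ‖ψ s‖ := by
          by_cases hcase : ‖φ s - g s‖ < δ₁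
          · have h1 := hδ₁ s (φ s) (hφK s) (g s) (hgK s) hcase
            have h2 : 0 ≤ c * ‖ψ s‖ := mul_nonneg hc0 (norm_nonneg _)
            linarith
          · push_neg at hcase
            rw [hψeq] at hcase
            have h1 : ‖f s (φ s) - f s (g s)‖ ≤ Cb := hCb s _ (hφK s) _ (hgK s)
            have h2 : Cb = c * δ₁ := by rw [hcdef]; field_simp
            have h3 : c * δ₁ ≤ c * ‖ψ s‖ := mul_le_mul_of_nonneg_left hcase hc0
            linarith [hε'0.le]
        have hB : ‖Φ s (g s)‖ ≤ ε' + ∑ i ∈ F, ‖Φ s (g i)‖ := by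
          obtain ⟨i, hiF, hi⟩ := hF s
          have h1 : ‖Φ s (g s)‖ ≤ ‖Φ s (g s) - Φ s (g i)‖ + ‖Φ s (g i)‖ := by
            simpa using norm_add_le (Φ s (g s) - Φ s (g i)) (Φ s (g i))
          have h2 : ‖Φ s (g s) - Φ s (g i)‖ < ε' := hδ₂ s _ (hgK s) _ (hgK i) hi
          have h3 : ‖Φ s (g i)‖ ≤ ∑ j ∈ F, ‖Φ s (g j)‖ :=
            Finset.single_le_sum (f := fun j => ‖Φ s (g j)‖) (fun j _ => norm_nonneg _) hiF
          linarith
        calc ‖β s‖ ≤ ‖f s (φ s) - f s (g s)‖ + ‖Φ s (g s)‖ := by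
              rw [hβeq s]; exact norm_add_le _ _
          _ ≤ (ε' + c * ‖ψ s‖) + (ε' + ∑ i ∈ F, ‖Φ s (g i)‖) := add_le_add hA hB
          _ = 2*ε' + c * ‖ψ s‖ + ∑ i ∈ F, ‖Φ s (g i)‖ := by ring
      have hev1 : ∀ᶠ r in atTop, (1/(2*r)) * (∫ s in (-r)..r, ‖ψ s‖) < ε'/(c+1) := by
        have h0 := Metric.tendsto_nhds.mp hψ.2.2 (ε'/(c+1)) (by positivity)
        filter_upwards [h0] with r hr
        rw [Real.dist_eq, sub_zero] at hr
        exact lt_of_le_of_lt (le_abs_self _) hr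
      obtain ⟨r₀, hr₀⟩ := hΦp.2.2 K hK (ε'/(F.card+1)) (by positivity)
      filter_upwards [eventually_ge_atTop (max r₀ 1), hev1] with r hrr hψr
      have hr1 : (1:ℝ) ≤ r := le_trans (le_max_right _ _) hrr
      have hrpos : (0:ℝ) < r := by linarith
      have hrr₀ : r₀ ≤ r := le_trans (le_max_left _ _) hrr
      have hψint : IntervalIntegrable (fun s => ‖ψ s‖) volume (-r) r :=
        (hψ.1.norm).intervalIntegrable _ _
      have hΦint : ∀ i : ℝ, IntervalIntegrable (fun s => ‖Φ s (g i)‖) volume (-r) r :=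
        fun i => ((hΦc (g i)).norm).intervalIntegrable _ _
      have hsumcont : Continuous fun s : ℝ => ∑ i ∈ F, ‖Φ s (g i)‖ := by
        apply continuous_finset_sum
        intro i _
        exact (hΦc (g i)).norm
      have hWint : IntervalIntegrable
          (fun s => 2*ε' + c * ‖ψ s‖ + ∑ i ∈ F, ‖Φ s (g i)‖) volume (-r) r :=
        (intervalIntegrable_const.add (hψint.const_mul c)).add
          (hsumcont.intervalIntegrable _ _)
      have hint1 : (∫ s in (-r)..r, ‖β s‖)
          ≤ ∫ s in (-r)..r, (2*ε' + c * ‖ψ s‖ + ∑ i ∈ F, ‖Φ s (g i)‖) :=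
        intervalIntegral.integral_mono_on (by linarith)
          (hβc.norm.intervalIntegrable _ _) hWint (fun s _ => hpt s)
      have hsplit : (∫ s in (-r)..r, (2*ε' + c * ‖ψ s‖ + ∑ i ∈ F, ‖Φ s (g i)‖))
          = (2*ε')*(2*r) + c * (∫ s in (-r)..r, ‖ψ s‖)
            + ∑ i ∈ F, ∫ s in (-r)..r, ‖Φ s (g i)‖ := by
        rw [intervalIntegral.integral_add (intervalIntegrable_const.add (hψint.const_mul c))
          (hsumcont.intervalIntegrable _ _),
          intervalIntegral.integral_add intervalIntegrable_const (hψint.const_mul c),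
          intervalIntegral.integral_const,
          intervalIntegral.integral_finset_sum (fun i _ => hΦint i),
          intervalIntegral.integral_const_mul, smul_eq_mul]
        ring
      have hA2r : (0:ℝ) < 2 * r := by linarith
      have hfrac : (0:ℝ) ≤ 1/(2*r) := by positivity
      have hterm2 : c * ((1/(2*r)) * (∫ s in (-r)..r, ‖ψ s‖)) ≤ ε' := by
        have h1 : c * ((1/(2*r)) * (∫ s in (-r)..r, ‖ψ s‖)) ≤ c * (ε'/(c+1)) :=
          mul_le_mul_of_nonneg_left hψr.le hc0
        have h2 : c * (ε'/(c+1)) ≤ ε' := by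
          rw [mul_div_assoc']
          rw [div_le_iff₀ (by positivity : (0:ℝ) < c + 1)]
          nlinarith
        linarith
      have hterm3 : (1/(2*r)) * (∑ i ∈ F, ∫ s in (-r)..r, ‖Φ s (g i)‖) ≤ ε' := by
        rw [Finset.mul_sum]
        have h1 : ∀ i ∈ F, (1/(2*r)) * (∫ s in (-r)..r, ‖Φ s (g i)‖) ≤ ε'/(F.card+1) :=
          fun i _ => (hr₀ r hrr₀ (g i) (hgK i)).le
        have h2 := Finset.sum_le_card_nsmul F _ (ε'/(F.card+1)) h1
        rw [nsmul_eq_mul] at h2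
        have h3 : (F.card : ℝ) * (ε'/((F.card:ℝ)+1)) ≤ ε' := by
          rw [mul_div_assoc']
          rw [div_le_iff₀ (by positivity : (0:ℝ) < (F.card:ℝ)+1)]
          nlinarith [Nat.cast_nonneg (α := ℝ) F.card, hε'0.le]
        exact le_trans h2 h3
      have halg : (1/(2*r)) * ((2*ε')*(2*r) + c * (∫ s in (-r)..r, ‖ψ s‖)
            + ∑ i ∈ F, ∫ s in (-r)..r, ‖Φ s (g i)‖)
          = 2*ε' + c * ((1/(2*r)) * (∫ s in (-r)..r, ‖ψ s‖))
            + (1/(2*r)) * (∑ i ∈ F, ∫ s in (-r)..r, ‖Φ s (g i)‖) := by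
        field_simp
      calc (1/(2*r)) * ∫ s in (-r)..r, ‖β s‖
          ≤ (1/(2*r)) * ((2*ε')*(2*r) + c * (∫ s in (-r)..r, ‖ψ s‖)
            + ∑ i ∈ F, ∫ s in (-r)..r, ‖Φ s (g i)‖) := by
            rw [← hsplit]
            exact mul_le_mul_of_nonneg_left hint1 hfrac
        _ = 2*ε' + c * ((1/(2*r)) * (∫ s in (-r)..r, ‖ψ s‖))
            + (1/(2*r)) * (∑ i ∈ F, ∫ s in (-r)..r, ‖Φ s (g i)‖) := halg
        _ ≤ 2*ε' + ε' + ε' := by linarith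
        _ < ε := by rw [hε'def]; linarith
  refine ⟨α, β, hαaa, ⟨hβc, ⟨Cb + CΦ', hβbd⟩, hβmean⟩, fun t => ?_⟩
  show f t (φ t) = G t (g t) + (f t (φ t) - G t (g t))
  abel
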